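/- arXiv:2204.11235 — 4 statements merged into one kernel-verified Lean document; each statement's English description precedes it below -/
import Mathlib

section
/- Let T be an unambiguous, clean and trim 1-nT computing a continuous partial function f : A^ω ⇀ B^ω. Let D be a compatible set and end_D : D → B^ω be any function such that for every initial step (J',w,D) and all p,q ∈ D, val(p)·end_D(p) = val(q)·end_D(q). Then for every initial step (J,u,C) and every step (C,v,D), and for all p,q ∈ D: adv(pre(p))·val_{C,D}(p)·end_D(p) = adv(pre(q))·val_{C,D}(q)·end_D(q), where pre and val_{C,D} refer to the step (C,v,D) and adv to the advances of the initial step (J,u,C) (whose values are pairwise mutual prefixes). -/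
/-- `u` is a prefix of the infinite word `y`. -/
def PrefixOf {B : Type} (u : List B) (y : ℕ → B) : Prop :=
  ∀ (i : ℕ) (h : i < u.length), u.get ⟨i, h⟩ = y i

/-- Concatenation of a finite word and an infinite word. -/
def listPrepend {B : Type} (u : List B) (y : ℕ → B) : ℕ → B :=
  fun i => if h : i < u.length then u.get ⟨i, h⟩ else y (i - u.length)

/-- The finite word `v` repeated `n` times. -/
def powList {B : Type} (v : List B) (n : ℕ) : List B :=
  (List.replicate n v).flatten

/-- The infinite word `y` equals `u · v^ω` (meaningful when `v ≠ []`). -/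
def EqUVomega {B : Type} (u v : List B) (y : ℕ → B) : Prop :=
  ∀ n : ℕ, PrefixOf (u ++ powList v n) y

/-- A one-way nondeterministic transducer (1-nT). The output function is given on
all triples; it is only relevant on the transition relation. -/
structure NT (A B : Type) where
  Q : Type
  fin : Fintype Q
  I : Set Q
  F : Set Q
  trans : Q → A → Q → Prop
  out : Q → A → Q → List B

attribute [instance] NT.fin

namespace NT

variable {A B : Type}

/-- `FinRun T q u α q'` means `q →^{u|α} q'`. -/
inductive FinRun (T : NT A B) : T.Q → List A → List B → T.Q → Prop
  | nil (q : T.Q) : FinRun T q [] [] q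
  | cons {q q' q'' : T.Q} {a : A} {u : List A} {α : List B} :
      T.trans q a q' → FinRun T q' u α q'' →
      FinRun T q (a :: u) (T.out q a q' ++ α) q''

/-- Infinite run on `x` (the `i`-th transition reads `x i`). -/
def IsRun (T : NT A B) (x : ℕ → A) (ρ : ℕ → T.Q) : Prop :=
  ∀ i : ℕ, T.trans (ρ i) (x i) (ρ (i + 1))

/-- Büchi condition: final states are visited infinitely often. -/
def Final (T : NT A B) (ρ : ℕ → T.Q) : Prop :=
  ∀ i : ℕ, ∃ j : ℕ, i ≤ j ∧ ρ j ∈ T.F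

/-- Accepting run: an initial and final run. -/
def Accepting (T : NT A B) (x : ℕ → A) (ρ : ℕ → T.Q) : Prop :=
  T.IsRun x ρ ∧ ρ 0 ∈ T.I ∧ T.Final ρ

/-- Output along the first `n` transitions of a run. -/
def outPrefix (T : NT A B) (x : ℕ → A) (ρ : ℕ → T.Q) (n : ℕ) : List B :=
  ((List.range n).map (fun i => T.out (ρ i) (x i) (ρ (i + 1)))).flatten

/-- The output along the run is infinite. -/
def InfiniteOutput (T : NT A B) (x : ℕ → A) (ρ : ℕ → T.Q) : Prop :=
  ∀ m : ℕ, ∃ n : ℕ, m ≤ (T.outPrefix x ρ n).length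

/-- The (infinite) output along the run equals `y`. -/
def OutEq (T : NT A B) (x : ℕ → A) (ρ : ℕ → T.Q) (y : ℕ → B) : Prop :=
  ∀ n : ℕ, PrefixOf (T.outPrefix x ρ n) y

/-- Every input labels at most one accepting run. -/
def Unambiguous (T : NT A B) : Prop :=
  ∀ x ρ₁ ρ₂, T.Accepting x ρ₁ → T.Accepting x ρ₂ → ρ₁ = ρ₂

/-- The partial function computed by an unambiguous 1-nT. -/
def Computes (T : NT A B) (f : (ℕ → A) → Option (ℕ → B)) : Prop :=
  ∀ x y, f x = some y ↔
    ∃ ρ, T.Accepting x ρ ∧ T.InfiniteOutput x ρ ∧ T.OutEq x ρ y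

/-- Every state occurs in some accepting run. -/
def Trim (T : NT A B) : Prop :=
  ∀ q : T.Q, ∃ x ρ, T.Accepting x ρ ∧ ∃ i, ρ i = q

/-- The output along every accepting run is infinite. -/
def Clean (T : NT A B) : Prop :=
  ∀ x ρ, T.Accepting x ρ → T.InfiniteOutput x ρ

end NT

/-- Continuity (for the Cantor topology) of a partial function on infinite words. -/
def ContinuousPartial {A B : Type} (f : (ℕ → A) → Option (ℕ → B)) : Prop :=
  ∀ x fx, f x = some fx → ∀ n : ℕ, ∃ p : ℕ, ∀ y fy, f y = some fy →
    (∀ i < p, x i = y i) → ∀ i < n, fx i = fy i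

namespace NT

variable {A B : Type}

/-- A compatible set of states: a common infinite future, one branch of which is final. -/
def Compatible (T : NT A B) (C : Set T.Q) : Prop :=
  ∃ (x : ℕ → A) (ρ : T.Q → ℕ → T.Q),
    (∀ q ∈ C, ρ q 0 = q ∧ T.IsRun x (ρ q)) ∧ ∃ q ∈ C, T.Final (ρ q)

/-- `(C,u,D)` is a pre-step, with predecessor map `pre` and outputs `val`. -/
def PreStepOn (T : NT A B) (C : Set T.Q) (u : List A) (D : Set T.Q)
    (pre : T.Q → T.Q) (val : T.Q → List B) : Prop :=
  T.Compatible C ∧ T.Compatible D ∧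
  (∀ q ∈ D, pre q ∈ C ∧ T.FinRun (pre q) u (val q) q) ∧
  (∀ q ∈ D, ∀ p ∈ C, (∃ α, T.FinRun p u α q) → p = pre q)

/-- `(C,u,D)` is a step: a pre-step with surjective predecessor map. -/
def StepOn (T : NT A B) (C : Set T.Q) (u : List A) (D : Set T.Q)
    (pre : T.Q → T.Q) (val : T.Q → List B) : Prop :=
  T.PreStepOn C u D pre val ∧ ∀ p ∈ C, ∃ q ∈ D, pre q = p

/-- `(J,u,C)` is an initial step. -/
def InitStepOn (T : NT A B) (J : Set T.Q) (u : List A) (C : Set T.Q)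
    (pre : T.Q → T.Q) (val : T.Q → List B) : Prop :=
  J ⊆ T.I ∧ T.StepOn J u C pre val

/-- `com` is the longest common prefix of the `val q` (`q ∈ C`) and
`adv q` is the advance of `q`, i.e. `val q = com ++ adv q`. -/
def AdvData (T : NT A B) (C : Set T.Q) (val : T.Q → List B)
    (com : List B) (adv : T.Q → List B) : Prop :=
  (∀ q ∈ C, val q = com ++ adv q) ∧
  (∀ c : List B, (∀ q ∈ C, c <+: val q) → c <+: com)

end NT

/-!
Composing the initial step `(J,u,C)` with the step `(C,v,D)` yields an initial step
`(J,uv,D)` with values `val (pre' q) ++ val' q = com ++ adv (pre' q) ++ val' q`; the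
hypothesis on `endD`, applied to it, gives the claim after cancelling the common prefix
`com`. The one nontrivial point is that `pre ∘ pre'` is the unique
predecessor in `J`: two runs on `uv` from initial states into the same state `r`
continue, by trimness, along a common final run from `r`, giving two accepting runs on
the same input, which coincide by unambiguity.
-/

section ListPrepend

variable {B : Type}

theorem listPrepend_nil (y : ℕ → B) : listPrepend [] y = y := by
  funext i
  simp [listPrepend]

theorem listPrepend_cons_zero (b : B) (u : List B) (y : ℕ → B) :
    listPrepend (b :: u) y 0 = b := by
  simp [listPrepend]

theorem listPrepend_cons_succ (b : B) (u : List B) (y : ℕ → B) (i : ℕ) :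
    listPrepend (b :: u) y (i + 1) = listPrepend u y i := by
  simp only [listPrepend, List.length_cons, Nat.add_lt_add_iff_right]
  split_ifs
  · rfl
  · congr 1
    omega

theorem listPrepend_append (a b : List B) (y : ℕ → B) :
    listPrepend (a ++ b) y = listPrepend a (listPrepend b y) := by
  induction a with
  | nil => simp [listPrepend_nil]
  | cons c a ih =>
    funext i
    cases i with
    | zero => simp only [List.cons_append, listPrepend_cons_zero]
    | succ i => rw [List.cons_append, listPrepend_cons_succ, listPrepend_cons_succ, ih]

theorem listPrepend_add_length (u : List B) (y : ℕ → B) (i : ℕ) :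
    listPrepend u y (u.length + i) = y i := by
  simp [listPrepend]

theorem listPrepend_left_injective (u : List B) :
    Function.Injective (listPrepend u) := fun y z h => by
  funext i
  simpa only [listPrepend_add_length] using congrFun h (u.length + i)

end ListPrepend

namespace NT

variable {A B : Type} {T : NT A B}

theorem FinRun.append {p r q : T.Q} {u v : List A} {α β : List B}
    (h₁ : T.FinRun p u α r) (h₂ : T.FinRun r v β q) :
    T.FinRun p (u ++ v) (α ++ β) q := by
  induction h₁ with
  | nil => simpa using h₂
  | cons ht _ ih =>
    rw [List.cons_append, List.append_assoc]
    exact .cons ht (ih h₂)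

theorem FinRun.exists_isRun_listPrepend {p q : T.Q} {w : List A} {α : List B}
    (h : T.FinRun p w α q) {x : ℕ → A} {σ : ℕ → T.Q} (hσ : T.IsRun x σ) (hσ₀ : σ 0 = q) :
    ∃ ρ : ℕ → T.Q, T.IsRun (listPrepend w x) ρ ∧ ρ 0 = p ∧ ∀ i, ρ (w.length + i) = σ i := by
  induction h with
  | nil => exact ⟨σ, by rwa [listPrepend_nil], hσ₀, by simp⟩
  | @cons p _ _ a u _ ht _ ih =>
    obtain ⟨ρ, hρ, hρ₀, hρσ⟩ := ih hσ₀
    refine ⟨fun i => Nat.casesOn i p ρ, fun i => ?_, rfl, fun i => ?_⟩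
    · cases i with
      | zero =>
        show T.trans p _ (ρ 0)
        rwa [listPrepend_cons_zero, hρ₀]
      | succ i => simpa only [listPrepend_cons_succ] using hρ i
    · simpa only [List.length_cons, Nat.add_right_comm] using hρσ i

theorem Final.of_shift {ρ σ : ℕ → T.Q} (n : ℕ) (hσ : T.Final σ)
    (hρσ : ∀ i, ρ (n + i) = σ i) : T.Final ρ := fun i => by
  obtain ⟨j, hij, hj⟩ := hσ i
  exact ⟨n + j, by omega, hρσ j ▸ hj⟩

theorem Trim.exists_final_run (hTr : T.Trim) (q : T.Q) :
    ∃ (x : ℕ → A) (σ : ℕ → T.Q), T.IsRun x σ ∧ σ 0 = q ∧ T.Final σ := by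
  obtain ⟨x, ρ, ⟨hρ, -, hfin⟩, n, rfl⟩ := hTr q
  refine ⟨fun i => x (n + i), fun i => ρ (n + i), fun i => hρ (n + i), rfl, fun i => ?_⟩
  obtain ⟨j, hij, hj⟩ := hfin (n + i)
  refine ⟨j - n, by omega, ?_⟩
  show ρ (n + (j - n)) ∈ T.F
  rwa [Nat.add_sub_cancel' (by omega)]

theorem FinRun.eq_of_initial (hU : T.Unambiguous) (hTr : T.Trim) {p p' r : T.Q}
    {w : List A} {α α' : List B} (hp : p ∈ T.I) (hp' : p' ∈ T.I)
    (h : T.FinRun p w α r) (h' : T.FinRun p' w α' r) : p = p' := by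
  obtain ⟨x, σ, hσ, hσ₀, hσfin⟩ := hTr.exists_final_run r
  obtain ⟨ρ, hρ, hρ₀, hρσ⟩ := h.exists_isRun_listPrepend hσ hσ₀
  obtain ⟨ρ', hρ', hρ'₀, hρ'σ⟩ := h'.exists_isRun_listPrepend hσ hσ₀
  have hρρ' : ρ = ρ' := hU _ ρ ρ'
    ⟨hρ, hρ₀ ▸ hp, hσfin.of_shift _ hρσ⟩ ⟨hρ', hρ'₀ ▸ hp', hσfin.of_shift _ hρ'σ⟩
  rw [← hρ₀, ← hρ'₀, hρρ']

theorem InitStepOn.comp (hU : T.Unambiguous) (hTr : T.Trim)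
    {J C D : Set T.Q} {u v : List A} {pre pre' : T.Q → T.Q} {val val' : T.Q → List B}
    (h : T.InitStepOn J u C pre val) (h' : T.StepOn C v D pre' val') :
    T.InitStepOn J (u ++ v) D (pre ∘ pre') (fun r => val (pre' r) ++ val' r) := by
  obtain ⟨hJI, ⟨hJ, -, hrun, -⟩, hsurj⟩ := h
  obtain ⟨⟨-, hD, hrun', -⟩, hsurj'⟩ := h'
  have hcomp : ∀ r ∈ D, pre (pre' r) ∈ J ∧
      T.FinRun (pre (pre' r)) (u ++ v) (val (pre' r) ++ val' r) r := fun r hr =>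
    have hr' := hrun' r hr
    have hr'' := hrun (pre' r) hr'.1
    ⟨hr''.1, hr''.2.append hr'.2⟩
  refine ⟨hJI, ⟨hJ, hD, hcomp, fun r hr p hp ⟨α, hα⟩ => ?_⟩, fun p hp => ?_⟩
  · exact hα.eq_of_initial hU hTr (hJI hp) (hJI (hcomp r hr).1) (hcomp r hr).2
  · obtain ⟨c, hc, rfl⟩ := hsurj p hp
    obtain ⟨r, hr, rfl⟩ := hsurj' c hc
    exact ⟨r, hr, rfl⟩

end NT

theorem end_after_step_general
    {A B : Type}
    (T : NT A B)
    (hU : T.Unambiguous) (hTr : T.Trim)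
    (D : Set T.Q) (endD : T.Q → ℕ → B)
    (hend : ∀ (J' : Set T.Q) (w : List A) (pre₀ : T.Q → T.Q) (val₀ : T.Q → List B),
      T.InitStepOn J' w D pre₀ val₀ →
      ∀ p ∈ D, ∀ q ∈ D,
        listPrepend (val₀ p) (endD p) = listPrepend (val₀ q) (endD q))
    (J : Set T.Q) (u : List A) (C : Set T.Q)
    (pre : T.Q → T.Q) (val : T.Q → List B)
    (com : List B) (adv : T.Q → List B)
    (hstep : T.InitStepOn J u C pre val) (hadv : T.AdvData C val com adv)
    (v : List A) (pre' : T.Q → T.Q) (val' : T.Q → List B)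
    (hstep' : T.StepOn C v D pre' val') :
    ∀ p ∈ D, ∀ q ∈ D,
      listPrepend (adv (pre' p)) (listPrepend (val' p) (endD p)) =
      listPrepend (adv (pre' q)) (listPrepend (val' q) (endD q)) := by
  intro p hp q hq
  have hval : ∀ r ∈ D, val (pre' r) = com ++ adv (pre' r) := fun r hr =>
    hadv.1 _ (hstep'.1.2.2.1 r hr).1
  have key := hend J (u ++ v) _ _ (hstep.comp hU hTr hstep') p hp q hq
  simp only [hval p hp, hval q hq, listPrepend_append] at key
  exact listPrepend_left_injective com key

/-- Ends after a step: the advances of an initial step followed by the outputs of a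
further step and the ends of the target set equalize. -/
theorem end_after_step
    {A B : Type} [Fintype A] [Fintype B]
    (T : NT A B) (f : (ℕ → A) → Option (ℕ → B))
    (hU : T.Unambiguous) (hCl : T.Clean) (hTr : T.Trim)
    (hT : T.Computes f) (hcont : ContinuousPartial f)
    (D : Set T.Q) (hD : T.Compatible D) (endD : T.Q → ℕ → B)
    (hend : ∀ (J' : Set T.Q) (w : List A) (pre₀ : T.Q → T.Q) (val₀ : T.Q → List B),
      T.InitStepOn J' w D pre₀ val₀ →
      ∀ p ∈ D, ∀ q ∈ D,
        listPrepend (val₀ p) (endD p) = listPrepend (val₀ q) (endD q))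
    (J : Set T.Q) (u : List A) (C : Set T.Q)
    (pre : T.Q → T.Q) (val : T.Q → List B)
    (com : List B) (adv : T.Q → List B)
    (hstep : T.InitStepOn J u C pre val) (hadv : T.AdvData C val com adv)
    (v : List A) (pre' : T.Q → T.Q) (val' : T.Q → List B)
    (hstep' : T.StepOn C v D pre' val') :
    ∀ p ∈ D, ∀ q ∈ D,
      listPrepend (adv (pre' p)) (listPrepend (val' p) (endD p)) =
      listPrepend (adv (pre' q)) (listPrepend (val' q) (endD q)) :=
  end_after_step_general T hU hTr D endD hend J u C pre val com adv hstep hadv v pre' val' hstep'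
end

section
/- Let T be an unambiguous 1-nT computing a partial function f : A^ω ⇀ B^ω, let x ∈ dom f, and let (q^x_i)_{i≥0} be the accepting run of T on x. For u ∈ A* and S ⊆ Q, write push_u(S) := {q' ∈ Q : q →^u q' for some q ∈ S}. Then for every i ≥ 0 and every S with q^x_i ∈ S ⊆ Q, there exist a compatible set C ⊆ S and an index j ≥ i such that push_{x[i+1:j]}(C) = push_{x[i+1:j]}(S). -/
namespace NT

variable {A B : Type}

/-- `push u S`: states reachable from `S` by a run labelled by `u`. -/
def push (T : NT A B) (u : List A) (S : Set T.Q) : Set T.Q :=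
  {q' | ∃ q ∈ S, ∃ α, T.FinRun q u α q'}

end NT

/-- The factor `x[i+1:j]` of an infinite word (letters `x i, …, x (j-1)` in 0-indexed
notation), empty when `j ≤ i`. -/
def wordFactor {A : Type} (x : ℕ → A) (i j : ℕ) : List A :=
  (List.range (j - i)).map fun k => x (i + k)

-- Kőnig's lemma, by compactness of `ℕ → Q`.
theorem exists_path_of_forall_exists_path_of_length {Q : Type*} [Finite Q]
    {step : ℕ → Q → Q → Prop} {q : Q}
    (h : ∀ n, ∃ σ : ℕ → Q, σ 0 = q ∧ ∀ m < n, step m (σ m) (σ (m + 1))) :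
    ∃ σ : ℕ → Q, σ 0 = q ∧ ∀ m, step m (σ m) (σ (m + 1)) := by
  let : TopologicalSpace Q := ⊥
  have : DiscreteTopology Q := ⟨rfl⟩
  let K : ℕ → Set (ℕ → Q) := fun n => {σ | σ 0 = q ∧ ∀ m < n, step m (σ m) (σ (m + 1))}
  have isClosed_pair : ∀ (a b : ℕ) (P : Q → Q → Prop), IsClosed {σ : ℕ → Q | P (σ a) (σ b)} :=
    fun a b P => (isClosed_discrete {p : Q × Q | P p.1 p.2}).preimage
      (f := fun σ : ℕ → Q => (σ a, σ b)) (by fun_prop)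
  have hK : ∀ n, IsClosed (K n) := fun n => by
    simp only [K, Set.ofPred_and, Set.ofPred_forall]
    exact (isClosed_pair 0 0 fun p _ => p = q).inter
      (isClosed_iInter fun m => isClosed_iInter fun _ => isClosed_pair m (m + 1) (step m))
  obtain ⟨σ, hσ⟩ := IsCompact.nonempty_iInter_of_sequence_nonempty_isCompact_isClosed K
    (fun n σ hσ => ⟨hσ.1, fun m hm => hσ.2 m (by omega)⟩) h (hK 0).isCompact hK
  rw [Set.mem_iInter] at hσ
  exact ⟨σ, (hσ 0).1, fun m => (hσ (m + 1)).2 m (by omega)⟩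

theorem exists_length_forall_exists_path {Q : Type*} [Finite Q] (step : ℕ → Q → Q → Prop) :
    ∃ N, ∀ q : Q, (∃ σ : ℕ → Q, σ 0 = q ∧ ∀ m < N, step m (σ m) (σ (m + 1))) →
      ∃ σ : ℕ → Q, σ 0 = q ∧ ∀ m, step m (σ m) (σ (m + 1)) := by
  have bound : ∀ q : Q, ∃ n, (∃ σ : ℕ → Q, σ 0 = q ∧ ∀ m < n, step m (σ m) (σ (m + 1))) →
      ∃ σ : ℕ → Q, σ 0 = q ∧ ∀ m, step m (σ m) (σ (m + 1)) := by
    intro q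
    by_contra! hq
    obtain ⟨σ, hσ⟩ := exists_path_of_forall_exists_path_of_length fun n => (hq n).1
    obtain ⟨m, hm⟩ := (hq 0).2 σ hσ.1
    exact hm (hσ.2 m)
  choose n hn using bound
  obtain ⟨N, hN⟩ := Finite.exists_le n
  exact ⟨N, fun q ⟨σ, hσ0, hσ⟩ => hn q ⟨σ, hσ0, fun m hm => hσ m (hm.trans_le (hN q))⟩⟩

namespace NT

variable {A B : Type} {T : NT A B}

theorem FinRun.exists_path {q q' : T.Q} {u : List A} {α : List B} (h : T.FinRun q u α q') :
    ∃ σ : ℕ → T.Q, σ 0 = q ∧ ∀ (m : ℕ) (hm : m < u.length), T.trans (σ m) u[m] (σ (m + 1)) := by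
  induction h with
  | nil p => exact ⟨fun _ => p, rfl, fun m hm => absurd hm (Nat.not_lt_zero m)⟩
  | @cons p _ _ _ _ _ ht _ ih =>
    obtain ⟨σ, hσ0, hσ⟩ := ih
    refine ⟨fun m => Nat.casesOn m p σ, rfl, fun m hm => ?_⟩
    cases m with
    | zero => simpa [hσ0] using ht
    | succ m => exact hσ m (Nat.lt_of_succ_lt_succ hm)

theorem FinRun.exists_path_wordFactor {q q' : T.Q} {x : ℕ → A} {i j : ℕ} {α : List B}
    (h : T.FinRun q (wordFactor x i j) α q') :
    ∃ σ : ℕ → T.Q, σ 0 = q ∧ ∀ m < j - i, T.trans (σ m) (x (i + m)) (σ (m + 1)) := by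
  obtain ⟨σ, hσ0, hσ⟩ := h.exists_path
  exact ⟨σ, hσ0, fun m hm => by simpa [wordFactor] using hσ m (by simpa [wordFactor] using hm)⟩

theorem IsRun.shift {x : ℕ → A} {ρ : ℕ → T.Q} (h : T.IsRun x ρ) (i : ℕ) :
    T.IsRun (fun k => x (i + k)) (fun k => ρ (i + k)) :=
  fun k => h (i + k)

theorem Final.shift {ρ : ℕ → T.Q} (h : T.Final ρ) (i : ℕ) : T.Final (fun k => ρ (i + k)) := by
  intro m
  obtain ⟨j, hj, hjF⟩ := h (i + m)
  exact ⟨j - i, by omega, by simpa [Nat.add_sub_cancel' (by omega : i ≤ j)]⟩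

theorem compatible_of_forall_exists_run {C : Set T.Q} {x : ℕ → A}
    (hrun : ∀ q ∈ C, ∃ σ : ℕ → T.Q, σ 0 = q ∧ T.IsRun x σ)
    {ρ : ℕ → T.Q} (hρC : ρ 0 ∈ C) (hρ : T.IsRun x ρ) (hF : T.Final ρ) : T.Compatible C := by
  classical
  choose! σ hσ using hrun
  refine ⟨x, Function.update σ (ρ 0) ρ, fun q hq => ?_, ρ 0, hρC, by simpa using hF⟩
  rcases eq_or_ne q (ρ 0) with rfl | hne
  · simpa using hρ
  · simpa [Function.update_of_ne hne] using hσ q hq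

theorem push_mono (u : List A) {C S : Set T.Q} (h : C ⊆ S) : T.push u C ⊆ T.push u S :=
  fun _ ⟨p, hp, hrun⟩ => ⟨p, h hp, hrun⟩

end NT

theorem compatible_covers_future_general
    {A B : Type}
    (T : NT A B)
    (x : ℕ → A)
    (ρ : ℕ → T.Q) (hρ : T.Accepting x ρ) :
    ∀ (i : ℕ) (S : Set T.Q), ρ i ∈ S →
      ∃ C : Set T.Q, C ⊆ S ∧ T.Compatible C ∧
        ∃ j : ℕ, i ≤ j ∧
          T.push (wordFactor x i j) C = T.push (wordFactor x i j) S := by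
  intro i S hρS
  let C : Set T.Q := {q ∈ S | ∃ σ : ℕ → T.Q, σ 0 = q ∧ T.IsRun (fun k => x (i + k)) σ}
  obtain ⟨N, hN⟩ := exists_length_forall_exists_path fun m p p' => T.trans p (x (i + m)) p'
  have hC : T.Compatible C := NT.compatible_of_forall_exists_run (fun q hq => hq.2)
    ⟨hρS, _, rfl, hρ.1.shift i⟩ (hρ.1.shift i) (hρ.2.2.shift i)
  refine ⟨C, Set.sep_subset _ _, hC, i + N, Nat.le_add_right i N,
    (NT.push_mono _ (Set.sep_subset _ _)).antisymm ?_⟩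
  rintro q' ⟨p, hpS, α, hrun⟩
  obtain ⟨σ, hσ0, hσ⟩ := hrun.exists_path_wordFactor
  exact ⟨p, ⟨hpS, hN p ⟨σ, hσ0, fun m hm => hσ m (by omega)⟩⟩, α, hrun⟩

/-- Compatible sets cover the future of any set containing the current state of the
accepting run. -/
theorem compatible_covers_future
    {A B : Type} [Fintype A] [Fintype B]
    (T : NT A B) (f : (ℕ → A) → Option (ℕ → B))
    (hU : T.Unambiguous) (hT : T.Computes f)
    (x : ℕ → A) (y : ℕ → B) (hx : f x = some y)
    (ρ : ℕ → T.Q) (hρ : T.Accepting x ρ) :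
    ∀ (i : ℕ) (S : Set T.Q), ρ i ∈ S →
      ∃ C : Set T.Q, C ⊆ S ∧ T.Compatible C ∧
        ∃ j : ℕ, i ≤ j ∧
          T.push (wordFactor x i j) C = T.push (wordFactor x i j) S :=
  compatible_covers_future_general T x ρ hρ
end

section
/- Let T be an unambiguous, clean, trim and productive 1-nT computing a continuous partial function f : A^ω ⇀ B^ω. Let (J,u,S) be an initial step and (S,u',S) a step such that u' ≠ ε, the map pre_{S,S} of the step (S,u',S) is the identity function on S, and some state of S is final. Then val_{S,S}(q) ≠ ε for every q ∈ S. -/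
namespace NT

variable {A B : Type}

/-- Productivity of a (clean) 1-nT. -/
def Productive (T : NT A B) : Prop :=
  ∀ (q₁ q₂ q₁' q₂' : T.Q) (u u' : List A) (α₁ α₁' α₂ α₂' : List B),
    q₁ ∈ T.I → q₂ ∈ T.I → q₁' ∈ T.F → u' ≠ [] →
    T.FinRun q₁ u α₁ q₁' → T.FinRun q₁' u' α₁' q₁' →
    T.FinRun q₂ u α₂ q₂' → T.FinRun q₂' u' α₂' q₂' →
    α₂' ≠ []

end NT

namespace NT

variable {A B : Type} {T : NT A B} {C D : Set T.Q} {u : List A}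
  {pre : T.Q → T.Q} {val : T.Q → List B} {q : T.Q}

theorem PreStepOn.finRun_self_of_pre_eq (h : T.PreStepOn C u D pre val) (hq : q ∈ D)
    (hpre : pre q = q) : T.FinRun q u (val q) q := by
  simpa only [hpre] using (h.2.2.1 q hq).2

theorem InitStepOn.pre_mem_initial (h : T.InitStepOn C u D pre val) (hq : q ∈ D) :
    pre q ∈ T.I ∧ T.FinRun (pre q) u (val q) q :=
  have hrun := h.2.1.2.2.1 q hq
  ⟨h.1 hrun.1, hrun.2⟩

end NT

theorem productive_identity_step_general
    {A B : Type}
    (T : NT A B)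
    (hPr : T.Productive)
    (J : Set T.Q) (u : List A) (S : Set T.Q)
    (pre : T.Q → T.Q) (val : T.Q → List B)
    (hstep : T.InitStepOn J u S pre val)
    (u' : List A) (pre' : T.Q → T.Q) (val' : T.Q → List B)
    (hstep' : T.StepOn S u' S pre' val')
    (hu' : u' ≠ []) (hid : ∀ q ∈ S, pre' q = q)
    (hfin : ∃ q ∈ S, q ∈ T.F) :
    ∀ q ∈ S, val' q ≠ [] := by
  intro q hq
  obtain ⟨q₀, hq₀, hq₀F⟩ := hfin
  obtain ⟨hI₀, hrun₀⟩ := hstep.pre_mem_initial hq₀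
  obtain ⟨hI, hrun⟩ := hstep.pre_mem_initial hq
  exact hPr _ _ q₀ q u u' _ _ _ _ hI₀ hI hq₀F hu' hrun₀
    (hstep'.1.finRun_self_of_pre_eq hq₀ (hid q₀ hq₀)) hrun
    (hstep'.1.finRun_self_of_pre_eq hq (hid q hq))

/-- Productivity of identity loops of steps: in a productive 1-nT, an identity step
on a nonempty word through a set containing a final state produces nonempty
outputs everywhere. -/
theorem productive_identity_step
    {A B : Type} [Fintype A] [Fintype B]
    (T : NT A B) (f : (ℕ → A) → Option (ℕ → B))
    (hU : T.Unambiguous) (hCl : T.Clean) (hTr : T.Trim) (hPr : T.Productive)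
    (hT : T.Computes f) (hcont : ContinuousPartial f)
    (J : Set T.Q) (u : List A) (S : Set T.Q)
    (pre : T.Q → T.Q) (val : T.Q → List B)
    (hstep : T.InitStepOn J u S pre val)
    (u' : List A) (pre' : T.Q → T.Q) (val' : T.Q → List B)
    (hstep' : T.StepOn S u' S pre' val')
    (hu' : u' ≠ []) (hid : ∀ q ∈ S, pre' q = q)
    (hfin : ∃ q ∈ S, q ∈ T.F) :
    ∀ q ∈ S, val' q ≠ [] :=
  productive_identity_step_general T hPr J u S pre val hstep u' pre' val' hstep' hu' hid hfin
end

section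
/- There do not exist integers M ≥ 0 and N ≥ 1 and finite words u₁,u₂,u₃,u₄,u₃',u₄' over the alphabet {0,1,2} with u₄ ≠ ε and u₄' ≠ ε such that for all n ≥ 0, both u₁ u₂ⁿ u₃ (u₄)^ω = 0^{M+Nn} 1 0^ω and u₁ u₂ⁿ u₃' (u₄')^ω = 0^{2(M+Nn)} 2 0^ω hold as equalities of infinite words. -/
variable {B : Type}

section powList

variable (v : List B) (n : ℕ)

@[simp]
lemma powList_zero : powList v 0 = [] := rfl

lemma powList_succ : powList v (n + 1) = v ++ powList v n := by
  simp [powList, List.replicate_succ]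

lemma powList_succ' : powList v (n + 1) = powList v n ++ v := by
  simp [powList, List.replicate_succ']

@[simp]
lemma length_powList : (powList v n).length = n * v.length := by
  simp [powList]

variable {v n}

lemma mem_of_mem_powList {x : B} (hx : x ∈ powList v n) : x ∈ v := by
  obtain ⟨l, hl, hxl⟩ := List.mem_flatten.mp hx
  rwa [List.eq_of_mem_replicate hl] at hxl

end powList

section PrefixOf

variable {u w : List B} {y : ℕ → B}

lemma PrefixOf.getElem?_eq (h : PrefixOf u y) {i : ℕ} (hi : i < u.length) :
    u[i]? = some (y i) := by
  rw [List.getElem?_eq_getElem hi]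
  exact congrArg some (h i hi)

lemma PrefixOf.of_isPrefix (h : PrefixOf w y) (hu : u <+: w) : PrefixOf u y := fun i hi => by
  simpa [hu.getElem hi] using h i (hi.trans_le hu.length_le)

lemma EqUVomega.prefixOf {v : List B} (h : EqUVomega u v y) : PrefixOf u y := by
  simpa using h 0

lemma EqUVomega.apply_add_length {v : List B} (h : EqUVomega u v y) {i : ℕ}
    (hi : u.length ≤ i) : y (i + v.length) = y i := by
  rcases v.length.eq_zero_or_pos with hv | hv
  · rw [hv, Nat.add_zero]
  set m := i - u.length + 1
  have hm : i - u.length < m * v.length := by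
    have : m ≤ m * v.length := Nat.le_mul_of_pos_right m hv
    omega
  have hlen : (u ++ powList v (m + 1)).length = u.length + m * v.length + v.length := by
    simp [Nat.succ_mul, Nat.add_assoc]
  have hshift := (h (m + 1)).getElem?_eq (i := i + v.length) (by omega)
  have hhere := (h (m + 1)).getElem?_eq (i := i) (by omega)
  rw [powList_succ, List.getElem?_append_right (by omega),
    List.getElem?_append_right (by omega)] at hshift
  rw [powList_succ', ← List.append_assoc, List.getElem?_append_left (by simp; omega),
    List.getElem?_append_right hi] at hhere
  rw [show i + v.length - u.length - v.length = i - u.length by omega] at hshift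
  exact Option.some_injective _ (hshift.symm.trans hhere)

end PrefixOf

section SingleLetter

variable [Zero B] {u₁ u₂ w v : List B} {p : ℕ} {c : B}

lemma lt_length_of_eqUVomega_single (h : EqUVomega w v (fun i => if i = p then c else 0))
    (hv : v ≠ []) (hc : c ≠ 0) : p < w.length := by
  by_contra! hp
  have hvpos := List.length_pos_iff.mpr hv
  have := h.apply_add_length hp
  simp only [Nat.add_eq_left, hvpos.ne', if_false, if_true] at this
  exact hc this.symm

lemma eq_zero_of_prefixOf_single
    (h : PrefixOf (u₁ ++ u₂ ++ u₂) (fun i => if i = p then c else 0))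
    {x : B} (hx : x ∈ u₂) : x = 0 := by
  obtain ⟨j, hj, rfl⟩ := List.mem_iff_getElem.mp hx
  have hfirst := h.getElem?_eq (i := u₁.length + j) (by simp; omega)
  have hsecond := h.getElem?_eq (i := u₁.length + u₂.length + j) (by simp; omega)
  rw [List.getElem?_append_left (by simp; omega), List.getElem?_append_right (by omega),
    Nat.add_sub_cancel_left, List.getElem?_eq_getElem hj, Option.some_inj] at hfirst
  rw [List.getElem?_append_right (by simp), List.length_append, Nat.add_sub_cancel_left,
    List.getElem?_eq_getElem hj, Option.some_inj] at hsecond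
  by_cases hp : u₁.length + j = p
  · rwa [if_neg (by omega)] at hsecond
  · rwa [if_neg hp] at hfirst

lemma le_of_prefixOf_single_of_forall_eq_zero
    (h : PrefixOf (u₁ ++ w) (fun i => if i = p then c else 0)) (hw : ∀ x ∈ w, x = 0)
    (hc : c ≠ 0) (hp : u₁.length ≤ p) : u₁.length + w.length ≤ p := by
  by_contra! hpw
  have hletter := h.getElem?_eq (i := p) (by simpa using hpw)
  rw [List.getElem?_append_right hp, if_pos rfl] at hletter
  exact hc (hw c (List.mem_of_getElem? hletter))

end SingleLetter

/-- Combinatorial core of the fact that the function `double` is not sequential. -/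
theorem double_not_sequential_core :
    ¬ ∃ (M N : ℕ) (u₁ u₂ u₃ u₄ u₃' u₄' : List (Fin 3)),
      1 ≤ N ∧ u₄ ≠ [] ∧ u₄' ≠ [] ∧
      ∀ n : ℕ,
        EqUVomega (u₁ ++ powList u₂ n ++ u₃) u₄
          (fun i => if i = M + N * n then 1 else 0) ∧
        EqUVomega (u₁ ++ powList u₂ n ++ u₃') u₄'
          (fun i => if i = 2 * (M + N * n) then 2 else 0) := by
  rintro ⟨M, N, u₁, u₂, u₃, u₄, u₃', u₄', hN, hu₄, hu₄', hall⟩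
  have hu₂ : ∀ x ∈ u₂, x = 0 := fun x =>
    eq_zero_of_prefixOf_single (u₁ := u₁) <| (hall 2).1.prefixOf.of_isPrefix <| by
      simp [powList_succ]
  set n := u₁.length + u₃.length + u₃'.length
  obtain ⟨h₁, h₂⟩ := hall n
  have hn : n ≤ N * n := Nat.le_mul_of_pos_left n hN
  have hlt₁ := lt_length_of_eqUVomega_single h₁ hu₄ (by decide)
  have hlt₂ := lt_length_of_eqUVomega_single h₂ hu₄' (by decide)
  have hle₁ := le_of_prefixOf_single_of_forall_eq_zero (u₁ := u₁) (w := powList u₂ n)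
    (h₁.prefixOf.of_isPrefix (List.prefix_append _ _))
    (fun x hx => hu₂ x (mem_of_mem_powList hx)) (by decide) (by omega)
  simp only [List.length_append, length_powList] at hlt₁ hlt₂ hle₁
  rcases u₂.length.eq_zero_or_pos with hb | hb
  · rw [hb] at hlt₁
    omega
  · have : n ≤ n * u₂.length := Nat.le_mul_of_pos_right n hb
    omega
end
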